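/- Let A be an object of 𝒞 and suppose there exist an object C′ in 𝒞 and a non-zero morphism C′ → ΣA. Let A → Y → Z → ΣA be an Auslander-Reiten triangle in 𝒯. Then the following are equivalent: (1) Z has a 𝒞-envelope ε : Z → C; (2) there exists an Auslander-Reiten triangle A → B → C → ΣA in 𝒞 (with first term the object A). -/

import Mathlib

open CategoryTheory CategoryTheory.Limits CategoryTheory.Pretriangulated

universe v u

variable {k : Type} [Field k]
variable {T : Type u} [Category.{v} T] [Preadditive T] [Linear k T]
  [HasZeroObject T] [HasShift T ℤ] [∀ n : ℤ, (shiftFunctor T n).Additive]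
  [Pretriangulated T]

/-- `ε : Z ⟶ C` is an `S`-preenvelope of `Z`: `C` lies in `S` and every morphism from `Z`
to an object of `S` factors through `ε`. -/
def IsPreenvelope (S : Set T) {Z C : T} (ε : Z ⟶ C) : Prop :=
  C ∈ S ∧ ∀ C' : T, C' ∈ S → ∀ f : Z ⟶ C', ∃ g : C ⟶ C', ε ≫ g = f

/-- `ε : Z ⟶ C` is an `S`-envelope: a left-minimal `S`-preenvelope. -/
def IsEnvelope (S : Set T) {Z C : T} (ε : Z ⟶ C) : Prop :=
  IsPreenvelope S ε ∧ ∀ g : C ⟶ C, ε ≫ g = ε → IsIso g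

/-- `X ⟶ Y ⟶ Z --d--> ΣX` is an Auslander-Reiten triangle in `T`. -/
def IsARTriangle {X Y Z : T} (f : X ⟶ Y) (g : Y ⟶ Z) (d : Z ⟶ X⟦(1 : ℤ)⟧) : Prop :=
  (Triangle.mk f g d ∈ distTriang T) ∧ d ≠ 0 ∧
    (∀ (X' : T) (u : X ⟶ X'), ¬(∃ v : X' ⟶ X, u ≫ v = 𝟙 X) → ∃ w : Y ⟶ X', f ≫ w = u) ∧
    (∀ (Z' : T) (u : Z' ⟶ Z), ¬(∃ v : Z ⟶ Z', v ≫ u = 𝟙 Z) → ∃ w : Z' ⟶ Y, w ≫ g = u)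

/-- `A ⟶ B ⟶ C --h--> ΣA` is an Auslander-Reiten triangle in the subcategory
determined by `S`. -/
def IsARTriangleIn (S : Set T) {A B C : T} (f : A ⟶ B) (g : B ⟶ C)
    (h : C ⟶ A⟦(1 : ℤ)⟧) : Prop :=
  A ∈ S ∧ B ∈ S ∧ C ∈ S ∧ (Triangle.mk f g h ∈ distTriang T) ∧ h ≠ 0 ∧
    (∀ A' : T, A' ∈ S → ∀ u : A ⟶ A',
      ¬(∃ v : A' ⟶ A, u ≫ v = 𝟙 A) → ∃ w : B ⟶ A', f ≫ w = u) ∧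
    (∀ C' : T, C' ∈ S → ∀ u : C' ⟶ C,
      ¬(∃ v : C ⟶ C', v ≫ u = 𝟙 C) → ∃ w : C' ⟶ B, w ≫ g = u)

/-
The connecting map `d` of the Auslander–Reiten triangle `A → Y → Z → ΣA` factors through
every nonzero map out of `Z` and every nonzero map into `ΣA`. Choosing a functional `ℓ` with
`ℓ d = 1`, the pairing `(φ, δ) ↦ ℓ (φ ≫ δ)` of `Hom(Z, C')` with `Hom(C', ΣA)` is therefore
nondegenerate in `φ`, and a dimension count shows that `η : Z → C` is an `S`-preenvelope as soon
as `d` factors as `η ≫ ψ ≫ δ` for every nonzero `δ : C' → ΣA` with `C' ∈ S`.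

Given an `S`-envelope `ε : Z → C`, the map `c` lets us write `d = ε ≫ w`. By Wakamatsu's lemma
`ε ≫ -` is injective on maps `C → ΣS`, and with the criterion above every `a` with `a ≫ w = w`
is invertible; this makes the cone of `w` an Auslander–Reiten triangle in `S`. Conversely, the
connecting map `w` of an Auslander–Reiten triangle in `S` receives `d = ε ≫ w`, and the same
criterion shows that `ε` is an `S`-envelope.
-/

lemma Triangle.yoneda_exact₁ (Δ : Triangle T) (hΔ : Δ ∈ distTriang T) {X : T} (f : Δ.obj₁ ⟶ X)
    (hf : Δ.mor₃ ≫ f⟦(1 : ℤ)⟧' = 0) : ∃ g : Δ.obj₂ ⟶ X, f = Δ.mor₁ ≫ g := by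
  obtain ⟨g, hg, -⟩ : ∃ g : Δ.obj₂ ⟶ X, Δ.mor₁ ≫ g = f ≫ 𝟙 X ∧ Δ.mor₂ ≫ 0 = g ≫ 0 :=
    complete_distinguished_triangle_morphism₂ _ _ hΔ (contractible_distinguished X) f 0
      (show Δ.mor₃ ≫ f⟦(1 : ℤ)⟧' = 0 ≫ 0 by rw [hf, zero_comp])
  exact ⟨g, by rw [hg, Category.comp_id]⟩

section Triangles

variable {A B C : T} {f : A ⟶ B} {g : B ⟶ C} {h : C ⟶ A⟦(1 : ℤ)⟧}

lemma not_exists_retraction_of_mor₃_ne_zero (hT : Triangle.mk f g h ∈ distTriang T)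
    (hh : h ≠ 0) : ¬ ∃ r : B ⟶ A, f ≫ r = 𝟙 A := by
  rintro ⟨r, hr⟩
  have : Mono f := mono_of_mono_fac hr
  exact hh (Triangle.mor₃_eq_zero_of_mono₁ _ hT this)

lemma not_exists_section_of_mor₂_ne_zero (hT : Triangle.mk f g h ∈ distTriang T)
    (hg : g ≠ 0) : ¬ ∃ s : B ⟶ A, s ≫ f = 𝟙 B := by
  rintro ⟨s, hs⟩
  have : Epi f := epi_of_epi_fac hs
  exact hg (Triangle.mor₂_eq_zero_of_epi₁ _ hT this)

lemma exists_comp_eq_mor₃_of_comp_mor₁_eq (hT : Triangle.mk f g h ∈ distTriang T)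
    {B' V : T} {u : A ⟶ B'} {v : B' ⟶ V} {γ : V ⟶ A⟦(1 : ℤ)⟧}
    (hT' : Triangle.mk u v γ ∈ distTriang T) {x : B ⟶ B'} (hx : f ≫ x = u) :
    ∃ t : C ⟶ V, t ≫ γ = h := by
  obtain ⟨t, -, ht⟩ : ∃ t : C ⟶ V, g ≫ t = x ≫ v ∧ h ≫ (𝟙 A)⟦(1 : ℤ)⟧' = t ≫ γ :=
    complete_distinguished_triangle_morphism _ _ hT hT' (𝟙 A) x
      (show f ≫ x = 𝟙 A ≫ u by rw [Category.id_comp, hx])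
  exact ⟨t, by rw [← ht, CategoryTheory.Functor.map_id, Category.comp_id]⟩

end Triangles

section ARTriangle

variable {A Y Z : T} {f : A ⟶ Y} {g : Y ⟶ Z} {d : Z ⟶ A⟦(1 : ℤ)⟧}

lemma IsARTriangle.exists_lift (hAR : IsARTriangle f g d) {V : T} (γ : V ⟶ A⟦(1 : ℤ)⟧)
    (hγ : γ ≠ 0) : ∃ t : Z ⟶ V, t ≫ γ = d := by
  obtain ⟨B, u, v, hT⟩ := distinguished_cocone_triangle₂ γ
  obtain ⟨x, hx⟩ := hAR.2.2.1 B u (not_exists_retraction_of_mor₃_ne_zero hT hγ)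
  exact exists_comp_eq_mor₃_of_comp_mor₁_eq hAR.1 hT hx

lemma IsARTriangle.exists_desc (hAR : IsARTriangle f g d) {X : T} (φ : Z ⟶ X)
    (hφ : φ ≠ 0) : ∃ δ : X ⟶ A⟦(1 : ℤ)⟧, φ ≫ δ = d := by
  obtain ⟨W, σ, r, hT⟩ := distinguished_cocone_triangle₁ φ
  obtain ⟨m, hm⟩ := hAR.2.2.2 W σ (not_exists_section_of_mor₂_ne_zero hT hφ)
  obtain ⟨δ, hδ, -⟩ : ∃ δ : X ⟶ A⟦(1 : ℤ)⟧, φ ≫ δ = 𝟙 Z ≫ d ∧ _ :=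
    complete_distinguished_triangle_morphism _ _ hT (rot_of_distTriang _ hAR.1) m (𝟙 Z)
      (show σ ≫ 𝟙 Z = m ≫ g by rw [Category.comp_id, hm])
  exact ⟨δ, by rw [hδ, Category.id_comp]⟩

end ARTriangle

lemma isIso_of_comp_eq_id {𝒜 : Type*} [Category 𝒜] [Preadditive 𝒜] [Linear k 𝒜] {D : 𝒜}
    [FiniteDimensional k (D ⟶ D)] {a b : D ⟶ D} (h : a ≫ b = 𝟙 D) : IsIso a := by
  have : Module.Finite k (End D) := ‹FiniteDimensional k (D ⟶ D)›
  have : IsArtinianRing (End D) := IsArtinianRing.of_finite k (End D)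
  let a' : End D := a
  let b' : End D := b
  have hba : b' * a' = 1 := h
  exact (isUnit_iff_isIso a').1 (IsUnit.of_mul_eq_one_right _ hba)

def IsExtensionClosed (S : Set T) : Prop :=
  ∀ {A B C : T} (f : A ⟶ B) (g : B ⟶ C) (h : C ⟶ A⟦(1 : ℤ)⟧),
    Triangle.mk f g h ∈ distTriang T → A ∈ S → C ∈ S → B ∈ S

section Subcategory

variable {S : Set T}

lemma IsARTriangleIn.exists_lift (hext : IsExtensionClosed S) {A B C : T} {u : A ⟶ B}
    {v : B ⟶ C} {w : C ⟶ A⟦(1 : ℤ)⟧} (hS : IsARTriangleIn S u v w) {V : T} (hV : V ∈ S)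
    (γ : V ⟶ A⟦(1 : ℤ)⟧) (hγ : γ ≠ 0) :
    ∃ t : C ⟶ V, t ≫ γ = w := by
  obtain ⟨E, u', v', hT⟩ := distinguished_cocone_triangle₂ γ
  obtain ⟨x, hx⟩ := hS.2.2.2.2.2.1 E (hext u' v' γ hT hS.1 hV) u'
    (not_exists_retraction_of_mor₃_ne_zero hT hγ)
  exact exists_comp_eq_mor₃_of_comp_mor₁_eq hS.2.2.2.1 hT hx

/-- Wakamatsu's lemma. -/
lemma IsEnvelope.eq_of_comp_eq (hext : IsExtensionClosed S) {Z C : T} {ε : Z ⟶ C}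
    (hε : IsEnvelope S ε) {A : T} (hA : A ∈ S) {β β' : C ⟶ A⟦(1 : ℤ)⟧}
    (h : ε ≫ β = ε ≫ β') : β = β' := by
  rw [← sub_eq_zero, ← Preadditive.comp_sub] at h
  rw [← sub_eq_zero]
  obtain ⟨E, a, e, hT⟩ := distinguished_cocone_triangle₂ (β - β')
  obtain ⟨ζ, hζ⟩ := Triangle.coyoneda_exact₃ _ hT ε h
  obtain ⟨η, hη⟩ := hε.1.2 E (hext a e _ hT hA hε.1.1) ζ
  have : IsIso (η ≫ e) := hε.2 _ (by rw [← Category.assoc, hη]; exact hζ.symm)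
  have he : e ≫ (β - β') = 0 := comp_distTriang_mor_zero₂₃ _ hT
  rw [← cancel_epi (η ≫ e), Category.assoc, he, comp_zero, comp_zero]

variable {A Y Z : T} {f : A ⟶ Y} {g : Y ⟶ Z} {d : Z ⟶ A⟦(1 : ℤ)⟧}

lemma IsARTriangle.isPreenvelope (hAR : IsARTriangle f g d)
    (hfd : ∀ X Y : T, FiniteDimensional k (X ⟶ Y)) {C : T} (hC : C ∈ S) (η : Z ⟶ C)
    (h : ∀ C' ∈ S, ∀ δ : C' ⟶ A⟦(1 : ℤ)⟧, δ ≠ 0 → ∃ ψ : C ⟶ C', η ≫ ψ ≫ δ = d) :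
    IsPreenvelope S η := by
  refine ⟨hC, fun C' hC' φ => ?_⟩
  obtain ⟨ℓ, hℓ⟩ := Module.Projective.exists_dual_eq_one k hAR.2.1
  let pairing : (Z ⟶ C') →ₗ[k] (C' ⟶ A⟦(1 : ℤ)⟧) →ₗ[k] k :=
    (Linear.comp (S := k) Z C' (A⟦(1 : ℤ)⟧)).compr₂ ℓ
  have hflip : Function.Injective (pairing ∘ₗ Linear.leftComp k C' η).flip := by
    refine (injective_iff_map_eq_zero _).2 fun δ hδ => by_contra fun hne => ?_
    obtain ⟨ψ, hψ⟩ := h C' hC' δ hne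
    have hzero : ℓ (η ≫ ψ ≫ δ) = 0 := by simpa [pairing] using LinearMap.congr_fun hδ ψ
    exact one_ne_zero (hℓ ▸ hψ ▸ hzero)
  obtain ⟨ψ, hψ⟩ := LinearMap.flip_injective_iff₂.1 hflip (pairing φ)
  refine ⟨ψ, by_contra fun hne => ?_⟩
  obtain ⟨δ, hδ⟩ := hAR.exists_desc (η ≫ ψ - φ) (sub_ne_zero.2 hne)
  have hzero : ℓ ((η ≫ ψ - φ) ≫ δ) = 0 := by
    simpa [pairing, Preadditive.sub_comp, sub_eq_zero] using LinearMap.congr_fun hψ δ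
  exact one_ne_zero (hℓ ▸ hδ ▸ hzero)

lemma IsEnvelope.isIso_of_comp_eq (hAR : IsARTriangle f g d)
    (hfd : ∀ X Y : T, FiniteDimensional k (X ⟶ Y)) (hext : IsExtensionClosed S)
    (hA : A ∈ S) {C : T} {ε : Z ⟶ C} (hε : IsEnvelope S ε) {w : C ⟶ A⟦(1 : ℤ)⟧}
    (hw : ε ≫ w = d) {a : C ⟶ C} (ha : a ≫ w = w) : IsIso a := by
  -- `ε ≫ a` is again a preenvelope, so minimality of `ε` makes `a` a split epimorphism.
  have hpre : IsPreenvelope S (ε ≫ a) := by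
    refine hAR.isPreenvelope hfd hε.1.1 _ fun C' hC' δ hδ => ?_
    obtain ⟨t, ht⟩ := hAR.exists_lift δ hδ
    obtain ⟨ψ, rfl⟩ := hε.1.2 C' hC' t
    have hψ : ψ ≫ δ = w := hε.eq_of_comp_eq hext hA (by rw [← Category.assoc, ht, hw])
    exact ⟨ψ, by rw [hψ, Category.assoc, ha, hw]⟩
  obtain ⟨b, hb⟩ := hpre.2 C hε.1.1 ε
  have : IsIso (a ≫ b) := hε.2 _ (by rw [← Category.assoc, hb])
  exact isIso_of_comp_eq_id (k := k) (b := b ≫ inv (a ≫ b))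
    (by rw [← Category.assoc, IsIso.hom_inv_id])

lemma IsEnvelope.isARTriangleIn (hAR : IsARTriangle f g d)
    (hfd : ∀ X Y : T, FiniteDimensional k (X ⟶ Y)) (hext : IsExtensionClosed S)
    (hA : A ∈ S) {C : T} {ε : Z ⟶ C} (hε : IsEnvelope S ε) {w : C ⟶ A⟦(1 : ℤ)⟧}
    (hw : ε ≫ w = d) {B : T} {u : A ⟶ B} {v : B ⟶ C} (hT : Triangle.mk u v w ∈ distTriang T) :
    IsARTriangleIn S u v w := by
  refine ⟨hA, hext u v w hT hA hε.1.1, hε.1.1, hT, ?_, ?_, ?_⟩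
  · rintro rfl
    exact hAR.2.1 (by rw [← hw, comp_zero])
  · intro A' hA' u' hu'
    obtain ⟨x, rfl⟩ := hAR.2.2.1 A' u' hu'
    have hdf : d ≫ f⟦(1 : ℤ)⟧' = 0 := comp_distTriang_mor_zero₃₁ _ hAR.1
    have hd : d ≫ (f ≫ x)⟦(1 : ℤ)⟧' = 0 := by
      rw [Functor.map_comp, ← Category.assoc, hdf, zero_comp]
    have hw' : w ≫ (f ≫ x)⟦(1 : ℤ)⟧' = 0 :=
      hε.eq_of_comp_eq hext hA' (by rw [← Category.assoc, hw, hd, comp_zero])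
    obtain ⟨y, hy⟩ := Triangle.yoneda_exact₁ _ hT _ hw'
    exact ⟨y, hy.symm⟩
  · intro C' hC' u' hu'
    by_cases hzero : u' ≫ w = 0
    · obtain ⟨y, hy⟩ := Triangle.coyoneda_exact₃ _ hT u' hzero
      exact ⟨y, hy.symm⟩
    obtain ⟨t, ht⟩ := hAR.exists_lift _ hzero
    obtain ⟨σ, rfl⟩ := hε.1.2 C' hC' t
    have hσ : (σ ≫ u') ≫ w = w :=
      hε.eq_of_comp_eq hext hA (by rw [hw, ← ht]; simp only [Category.assoc])
    have := hε.isIso_of_comp_eq hAR hfd hext hA hw hσ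
    exact absurd ⟨inv (σ ≫ u') ≫ σ, by simp⟩ hu'

lemma IsARTriangleIn.isEnvelope (hAR : IsARTriangle f g d)
    (hfd : ∀ X Y : T, FiniteDimensional k (X ⟶ Y)) (hext : IsExtensionClosed S)
    {B C : T} {u : A ⟶ B} {v : B ⟶ C} {w : C ⟶ A⟦(1 : ℤ)⟧} (hS : IsARTriangleIn S u v w)
    {ε : Z ⟶ C} (hε : ε ≫ w = d) : IsEnvelope S ε := by
  refine ⟨hAR.isPreenvelope hfd hS.2.2.1 ε fun C' hC' δ hδ => ?_, fun a ha => ?_⟩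
  · obtain ⟨τ, hτ⟩ := hS.exists_lift hext hC' δ hδ
    exact ⟨τ, by rw [hτ, hε]⟩
  · have hret : ∃ ρ : C ⟶ C, ρ ≫ a = 𝟙 C := by
      by_contra hno
      obtain ⟨x, rfl⟩ := hS.2.2.2.2.2.2 C hS.2.2.1 a hno
      have hvw : v ≫ w = 0 := comp_distTriang_mor_zero₂₃ _ hS.2.2.2.1
      apply hAR.2.1
      rw [← hε, ← ha, Category.assoc, Category.assoc, hvw, comp_zero, comp_zero]
    obtain ⟨ρ, hρ⟩ := hret
    have : IsIso ρ := isIso_of_comp_eq_id (k := k) hρ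
    exact IsIso.inv_eq_of_hom_inv_id hρ ▸ inferInstance

end Subcategory

theorem envelope_iff_AR_triangle_in_subcategory_general (S : Set T)
    (hfd : ∀ X Y : T, FiniteDimensional k (X ⟶ Y))
    (hext : ∀ {A B C : T} (f : A ⟶ B) (g : B ⟶ C) (h : C ⟶ A⟦(1 : ℤ)⟧),
      Triangle.mk f g h ∈ (distTriang T) → A ∈ S → C ∈ S → B ∈ S)
    {A C' : T} (hA : A ∈ S) (hC' : C' ∈ S)
    (c : C' ⟶ A⟦(1 : ℤ)⟧) (hc : c ≠ 0)
    {Y Z : T} (f : A ⟶ Y) (g : Y ⟶ Z) (d : Z ⟶ A⟦(1 : ℤ)⟧)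
    (hAR : IsARTriangle f g d) :
    (∃ (C : T) (ε : Z ⟶ C), IsEnvelope S ε) ↔
    (∃ (B C : T) (u : A ⟶ B) (v : B ⟶ C) (w : C ⟶ A⟦(1 : ℤ)⟧),
      IsARTriangleIn S u v w) := by
  constructor
  · rintro ⟨C, ε, hε⟩
    obtain ⟨t, ht⟩ := hAR.exists_lift c hc
    obtain ⟨ψ, rfl⟩ := hε.1.2 C' hC' t
    obtain ⟨B, u, v, hT⟩ := distinguished_cocone_triangle₂ (ψ ≫ c)
    exact ⟨B, C, u, v, _, hε.isARTriangleIn hAR hfd hext hA (by rw [← Category.assoc, ht]) hT⟩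
  · rintro ⟨B, C, u, v, w, hS⟩
    obtain ⟨ε, hε⟩ := hAR.exists_lift w hS.2.2.2.2.1
    exact ⟨C, ε, hS.isEnvelope hAR hfd hext hε⟩

/-- Dual main theorem: if `A ∈ S` admits a non-zero morphism from an object of `S` to
`ΣA`, and `A ⟶ Y ⟶ Z ⟶ ΣA` is an Auslander-Reiten triangle in `T`, then `Z` has an
`S`-envelope if and only if there is an Auslander-Reiten triangle `A ⟶ B ⟶ C ⟶ ΣA` in
the subcategory `S` starting at `A`. -/
theorem envelope_iff_AR_triangle_in_subcategory (S : Set T)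
    [EssentiallySmall.{v} T] [IsIdempotentComplete T]
    (hfd : ∀ X Y : T, FiniteDimensional k (X ⟶ Y))
    (hiso : ∀ {X Y : T}, (X ≅ Y) → X ∈ S → Y ∈ S)
    (hext : ∀ {A B C : T} (f : A ⟶ B) (g : B ⟶ C) (h : C ⟶ A⟦(1 : ℤ)⟧),
      Triangle.mk f g h ∈ (distTriang T) → A ∈ S → C ∈ S → B ∈ S)
    (hsum : ∀ {A A₁ : T} (i : A₁ ⟶ A) (p : A ⟶ A₁), i ≫ p = 𝟙 A₁ → A ∈ S → A₁ ∈ S)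
    {A C' : T} (hA : A ∈ S) (hC' : C' ∈ S)
    (c : C' ⟶ A⟦(1 : ℤ)⟧) (hc : c ≠ 0)
    {Y Z : T} (f : A ⟶ Y) (g : Y ⟶ Z) (d : Z ⟶ A⟦(1 : ℤ)⟧)
    (hAR : IsARTriangle f g d) :
    (∃ (C : T) (ε : Z ⟶ C), IsEnvelope S ε) ↔
    (∃ (B C : T) (u : A ⟶ B) (v : B ⟶ C) (w : C ⟶ A⟦(1 : ℤ)⟧),
      IsARTriangleIn S u v w) :=
  envelope_iff_AR_triangle_in_subcategory_general S hfd hext hA hC' c hc f g d hAR
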